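/- Let c, C > 0 be absolute constants and let Σ̃ ∈ ℝ^{d×d} be positive definite with c·Id ⪯ Σ̃ ⪯ C·Id. Let x = ξ·Σ̃^{1/2}·(g/‖g‖), where g ∼ N(0, Id_d) and ξ is a positive random variable independent of g, and suppose the distribution of x is C_SE-sub-exponential with C_SE = O(1). Then for every even p ∈ ℕ with p ≤ d: (i) (E ξ^p)^{1/p} ≤ O(√p·(E ξ²)^{1/2}); and (ii) (E ‖x‖^p)^{1/p} ≤ O(√p·(E ‖x‖²)^{1/2}). -/

import Mathlib

open MeasureTheory ProbabilityTheory Matrix Finset Real Filter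

noncomputable section

namespace Paper

variable {d n : ℕ}

/-- Spectral (operator) norm of a matrix. -/
def specNorm (A : Matrix (Fin d) (Fin d) ℝ) : ℝ :=
  ‖LinearMap.toContinuousLinearMap (Matrix.toEuclideanLin A)‖

/-- Frobenius norm of a matrix. -/
def frobNorm (A : Matrix (Fin d) (Fin d) ℝ) : ℝ :=
  Real.sqrt (∑ i, ∑ j, (A i j) ^ 2)

/-- Effective rank. -/
def erk (A : Matrix (Fin d) (Fin d) ℝ) : ℝ := A.trace / specNorm A

open Classical in
/-- Positive semidefinite square root (junk value `0` if not psd). -/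
def matSqrt (A : Matrix (Fin d) (Fin d) ℝ) : Matrix (Fin d) (Fin d) ℝ :=
  if h : A.PosSemidef then
    (h.1.eigenvectorUnitary : Matrix (Fin d) (Fin d) ℝ) *
      diagonal ((↑) ∘ (Real.sqrt ·) ∘ h.1.eigenvalues) *
      (star h.1.eigenvectorUnitary : Matrix (Fin d) (Fin d) ℝ)
  else 0

/-- Inverse of the positive semidefinite square root. -/
def invSqrt (A : Matrix (Fin d) (Fin d) ℝ) : Matrix (Fin d) (Fin d) ℝ := (matSqrt A)⁻¹

/-- Standard Gaussian measure on ℝ^d. -/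
def stdGaussian (d : ℕ) : Measure (Fin d → ℝ) :=
  Measure.pi fun _ => gaussianReal 0 1

/-- Centered Gaussian measure with covariance S. -/
def gaussianOf (S : Matrix (Fin d) (Fin d) ℝ) : Measure (Fin d → ℝ) :=
  (stdGaussian d).map (matSqrt S).mulVec

/-- Spatial sign (projection on the sphere of radius √d). -/
def spSign (d : ℕ) (x : Fin d → ℝ) : Fin d → ℝ :=
  fun i => Real.sqrt d * x i / Real.sqrt (∑ j, (x j) ^ 2)

/-- Truncated spatial sign with threshold Δ. -/
def truncSign (d : ℕ) (Δ : ℝ) (x : Fin d → ℝ) : Fin d → ℝ :=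
  if (∑ i, (x i) ^ 2) < (d : ℝ) - Δ then fun i => Real.sqrt ((d : ℝ) / ((d : ℝ) - Δ)) * x i
  else if (d : ℝ) + Δ < (∑ i, (x i) ^ 2) then fun i => Real.sqrt ((d : ℝ) / ((d : ℝ) + Δ)) * x i
  else spSign d x

/-- Mean vector of a measure on ℝ^d. -/
def meanVec (μ : Measure (Fin d → ℝ)) : Fin d → ℝ := fun i => ∫ x, x i ∂μ

/-- Covariance matrix of a measure on ℝ^d. -/
def covMatrix (μ : Measure (Fin d → ℝ)) : Matrix (Fin d) (Fin d) ℝ :=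
  Matrix.of fun i j => ∫ x, (x i - meanVec μ i) * (x j - meanVec μ j) ∂μ

/-- Inner product of vectors indexed by `ι`. -/
def inner1 {ι : Type*} [Fintype ι] (v x : ι → ℝ) : ℝ := ∑ j, v j * x j

/-- Inner product of "matrices" indexed by `ι × ι`. -/
def innerM {ι : Type*} [Fintype ι] (P Q : ι → ι → ℝ) : ℝ := ∑ j, ∑ k, P j k * Q j k

/-- Outer product. -/
def outer {ι : Type*} (x y : ι → ℝ) : ι → ι → ℝ := fun j k => x j * y k

/-- sup_{v ∈ V} ⟨v, a⟩². -/
def supInner {ι : Type*} [Fintype ι] (V : Set (ι → ℝ)) (a : ι → ℝ) : ℝ :=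
  sSup ((fun v => (inner1 v a) ^ 2) '' V)

/-- Generalized stability (Definition 4 of the paper). -/
def IsStable {ι : Type*} [Fintype ι] (x : Fin n → ι → ℝ) (ε δ r : ℝ)
    (V : Set (ι → ℝ)) (P : Set (ι → ι → ℝ)) (μ : ι → ℝ) (Q : ι → ι → ℝ) : Prop :=
  ∀ v ∈ V, ∀ p ∈ P, ∀ M : Finset (Fin n), (1 - ε) * (n : ℝ) ≤ (M.card : ℝ) →
    |(M.card : ℝ)⁻¹ * ∑ i ∈ M, inner1 v (fun j => x i j - μ j)| ≤ δ ∧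
    |(M.card : ℝ)⁻¹ * ∑ i ∈ M, innerM p (outer (fun j => x i j - μ j) (fun j => x i j - μ j))
        - innerM p Q| ≤ δ ^ 2 / ε ∧
    |innerM p Q| ≤ r ^ 2

/-- 𝒱 ⊗ 𝒱 ⊆ 𝒫. -/
def TensorSub {ι : Type*} (V : Set (ι → ℝ)) (P : Set (ι → ι → ℝ)) : Prop :=
  ∀ v ∈ V, ∀ v' ∈ V, outer v v' ∈ P

/-- Adequacy of 𝒫 with respect to 𝒱. -/
def Adequate {ι : Type*} [Fintype ι] (V : Set (ι → ℝ)) (P : Set (ι → ι → ℝ)) : Prop :=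
  (∀ a : ι → ℝ, ∀ p ∈ P, 0 ≤ innerM p (outer a a)) ∧
  (∀ a b : ι → ℝ, ∀ p ∈ P, (innerM p (outer a b)) ^ 2 ≤ supInner V a * supInner V b)

/-- The weight set 𝒲_ε. -/
def weightSet (n : ℕ) (ε : ℝ) : Set (Fin n → ℝ) :=
  {w | (∀ i, 0 ≤ w i ∧ w i ≤ 1 / (n : ℝ)) ∧ 1 - ε ≤ ∑ i, w i}

/-- Weighted mean μ_w. -/
def wMean {ι : Type*} (w : Fin n → ℝ) (x : Fin n → ι → ℝ) : ι → ℝ :=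
  fun j => (∑ i, w i)⁻¹ * ∑ i, w i * x i j

/-- Weighted covariance Σ_w. -/
def wCov {ι : Type*} (w : Fin n → ℝ) (x : Fin n → ι → ℝ) : ι → ι → ℝ :=
  fun j k => (∑ i, w i)⁻¹ * ∑ i, w i * (x i j - wMean w x j) * (x i k - wMean w x k)

/-- A d×d matrix viewed as a vector in ℝ^{d²}. -/
def mvec (A : Matrix (Fin d) (Fin d) ℝ) : Fin d × Fin d → ℝ := fun p => A p.1 p.2

/-- Id_d as a vector in ℝ^{d²}. -/
def idVec (d : ℕ) : Fin d × Fin d → ℝ := fun p => if p.1 = p.2 then 1 else 0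

/-- 2·Id_{d²}. -/
def twoId (d : ℕ) : (Fin d × Fin d) → (Fin d × Fin d) → ℝ :=
  fun p q => if p = q then 2 else 0

/-- The Frobenius-norm ball ℬ_R (as vectors in ℝ^{d²}). -/
def ballF (d : ℕ) (R : ℝ) : Set (Fin d × Fin d → ℝ) :=
  {V | ∑ p : Fin d × Fin d, (V p) ^ 2 ≤ R ^ 2}

/-- ℬ_R ⊗ ℬ_R. -/
def ballFT (d : ℕ) (R : ℝ) : Set ((Fin d × Fin d) → (Fin d × Fin d) → ℝ) :=
  {P | ∃ V ∈ ballF d R, ∃ W ∈ ballF d R, P = outer V W}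

/-- 𝒮_R = {uuᵀ : ‖u‖ ≤ √R}. -/
def sphereSet (d : ℕ) (R : ℝ) : Set (Fin d × Fin d → ℝ) :=
  {V | ∃ u : Fin d → ℝ, (∑ i, (u i) ^ 2) ≤ R ∧ V = fun p => u p.1 * u p.2}

/-- 𝒫_R: the set of degree-4 pseudo-expectation moment matrices Ẽ[v^{⊗4}]
under the constraint ‖v‖² ≤ R. -/
def pseudoSet (d : ℕ) (R : ℝ) : Set ((Fin d × Fin d) → (Fin d × Fin d) → ℝ) :=
  {P | ∃ L : MvPolynomial (Fin d) ℝ →ₗ[ℝ] ℝ,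
    L 1 = 1 ∧
    (∀ q : MvPolynomial (Fin d) ℝ, q.totalDegree ≤ 2 → 0 ≤ L (q ^ 2)) ∧
    (∀ q : MvPolynomial (Fin d) ℝ, q.totalDegree ≤ 1 →
      0 ≤ L ((MvPolynomial.C R - ∑ i, MvPolynomial.X i ^ 2) * q ^ 2)) ∧
    P = fun p q => L (MvPolynomial.X p.1 * MvPolynomial.X p.2 *
        MvPolynomial.X q.1 * MvPolynomial.X q.2)}

/-- The Hanson–Wright property of a distribution ρ with mean μv and covariance S. -/
def HansonWright (ρ : Measure (Fin d → ℝ)) (μv : Fin d → ℝ)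
    (S : Matrix (Fin d) (Fin d) ℝ) (CHW : ℝ) : Prop :=
  ∀ A : Matrix (Fin d) (Fin d) ℝ, ∀ t : ℝ, 0 < t →
    ρ {x | t ≤ |(∑ j, ∑ k, ((invSqrt S).mulVec (fun l => x l - μv l)) j * A j k *
        ((invSqrt S).mulVec (fun l => x l - μv l)) k) - A.trace|}
      ≤ ENNReal.ofReal (2 * Real.exp (-(1 / CHW) *
          min (t ^ 2 / (frobNorm A) ^ 2) (t / specNorm A)))

/-- ε-corruption of an indexed family of points. -/
def Corruption {α : Type*} (n : ℕ) (ε : ℝ) (x y : Fin n → α) : Prop :=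
  ∃ G : Finset (Fin n), (1 - ε) * (n : ℝ) ≤ (G.card : ℝ) ∧ ∀ i ∈ G, x i = y i

/-- Entries of the 4-tensor E[(xxᵀ − Id)^{⊗2}] of a measure μ on ℝ^d. -/
def tensorEnt (μ : Measure (Fin d → ℝ)) (i1 i2 i3 i4 : Fin d) : ℝ :=
  ∫ x, (x i1 * x i2 - if i1 = i2 then (1 : ℝ) else 0) *
       (x i3 * x i4 - if i3 = i4 then (1 : ℝ) else 0) ∂μ

/-- E[(xxᵀ − Id)^{⊗2}] as a d²×d² matrix. -/
def tensorQ (μ : Measure (Fin d → ℝ)) : (Fin d × Fin d) → (Fin d × Fin d) → ℝ :=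
  fun p q => tensorEnt μ p.1 p.2 q.1 q.2

/-!
Testing the moment hypothesis against `u = Σ̃^{-1/2} eᵢ` turns `⟨u, x⟩` into `ξ · gᵢ / ‖g‖`,
whose moments factor by independence of `ξ` and `g`. For `p ≤ d` the `L^p` norm of `gᵢ / ‖g‖` is
of order `√(p / d)`, while its `L²` norm is at most `1 / √d` because the coordinates of `g` are
exchangeable; the factors `1 / √d` cancel, and the bound `O(p)` on the moments of `⟨u, x⟩` becomes
the bound `O(√p)` on those of `ξ`. For the norm, `‖x‖² = ξ² ⟨ĝ, Σ̃ ĝ⟩` with `ĝ = g / ‖g‖`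
and `c ≤ ⟨ĝ, Σ̃ ĝ⟩ ≤ C` almost surely, so the moments of `‖x‖` are those of `ξ` up to `√(C / c)`.
-/

open scoped Nat

section GaussianReal

lemma gaussianPDFReal_zero_one (x : ℝ) :
    gaussianPDFReal 0 1 x = (√(2 * π))⁻¹ * rexp (-(1 / 2) * x ^ 2) := by
  simp only [gaussianPDFReal, NNReal.coe_one, mul_one, sub_zero]
  ring_nf

lemma integrable_gaussianReal_iff {f : ℝ → ℝ} :
    Integrable f (gaussianReal 0 1) ↔ Integrable (fun x => gaussianPDFReal 0 1 x * f x) := by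
  rw [gaussianReal_of_var_ne_zero 0 one_ne_zero, integrable_withDensity_iff_integrable_smul'
    (measurable_gaussianPDF 0 1) (ae_of_all _ fun _ => gaussianPDF_lt_top)]
  simp_rw [toReal_gaussianPDF, smul_eq_mul]

lemma gaussianPDFReal_zero_one_mul_exp_mul_sq (l x : ℝ) :
    gaussianPDFReal 0 1 x * rexp (l * x ^ 2) = (√(2 * π))⁻¹ * rexp (-(1 / 2 - l) * x ^ 2) := by
  rw [gaussianPDFReal_zero_one, mul_assoc, ← Real.exp_add]
  ring_nf

lemma integrable_exp_mul_sq_gaussianReal {l : ℝ} (hl : l < 1 / 2) :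
    Integrable (fun x => rexp (l * x ^ 2)) (gaussianReal 0 1) := by
  rw [integrable_gaussianReal_iff]
  simp_rw [gaussianPDFReal_zero_one_mul_exp_mul_sq]
  exact (integrable_exp_neg_mul_sq (by linarith)).const_mul _

lemma integral_exp_mul_sq_gaussianReal {l : ℝ} (hl : l < 1 / 2) :
    ∫ x, rexp (l * x ^ 2) ∂gaussianReal 0 1 = √((1 - 2 * l)⁻¹) := by
  rw [integral_gaussianReal_eq_integral_smul one_ne_zero]
  simp_rw [smul_eq_mul, gaussianPDFReal_zero_one_mul_exp_mul_sq]
  rw [integral_const_mul, integral_gaussian, ← Real.sqrt_inv, ← Real.sqrt_mul (by positivity)]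
  congr 1
  have : 0 < 1 - 2 * l := by linarith
  field_simp

/-- Integrate over `[√q, √q + 1]`, where `|t| ^ q ≥ q ^ (q / 2)` and the density is at least
`e ^ (-2 q) / √(2π)`. -/
lemma pow_le_integral_abs_pow_gaussianReal {q : ℕ} (hq : 1 ≤ q) :
    (rexp (-2) / √(2 * π) * √q) ^ q ≤ ∫ t, |t| ^ q ∂gaussianReal 0 1 := by
  have hq' : (1 : ℝ) ≤ q := by exact_mod_cast hq
  have hint : Integrable (fun t => gaussianPDFReal 0 1 t * |t| ^ q) :=
    integrable_gaussianReal_iff.1 ((memLp_id_gaussianReal q).integrable_norm_pow (by omega))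
  have hpoint : ∀ t ∈ Set.Icc (√q) (√q + 1),
      (rexp (-2) / √(2 * π) * √q) ^ q ≤ gaussianPDFReal 0 1 t * |t| ^ q := by
    rintro t ⟨ht₁, ht₂⟩
    have hsq : √q * √q = q := Real.mul_self_sqrt (Nat.cast_nonneg q)
    have hone : 1 ≤ √q := Real.one_le_sqrt.mpr hq'
    have hπ : 1 ≤ √(2 * π) := Real.one_le_sqrt.mpr (by nlinarith [pi_gt_three])
    have hdens : (rexp (-2) / √(2 * π)) ^ q ≤ gaussianPDFReal 0 1 t := by
      rw [gaussianPDFReal_zero_one, div_pow, ← Real.exp_nat_mul, div_eq_inv_mul]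
      gcongr ?_ * rexp ?_
      · exact inv_anti₀ (by positivity) (le_self_pow₀ hπ (by omega))
      · nlinarith
    have hpow : √q ^ q ≤ |t| ^ q := pow_le_pow_left₀ (by positivity) (ht₁.trans (le_abs_self t)) q
    rw [mul_pow]
    exact mul_le_mul hdens hpow (by positivity) (gaussianPDFReal_nonneg 0 1 t)
  calc (rexp (-2) / √(2 * π) * √q) ^ q
      = ∫ _ in Set.Icc (√q) (√q + 1), (rexp (-2) / √(2 * π) * √q) ^ q := by simp
    _ ≤ ∫ t in Set.Icc (√q) (√q + 1), gaussianPDFReal 0 1 t * |t| ^ q :=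
        setIntegral_mono_on (integrableOn_const measure_Icc_lt_top.ne) hint.integrableOn
          measurableSet_Icc hpoint
    _ ≤ ∫ t, gaussianPDFReal 0 1 t * |t| ^ q :=
        setIntegral_le_integral hint (ae_of_all _ fun t =>
          mul_nonneg (gaussianPDFReal_nonneg 0 1 t) (by positivity))
    _ = ∫ t, |t| ^ q ∂gaussianReal 0 1 := (integral_gaussianReal_eq_integral_smul one_ne_zero).symm

end GaussianReal

lemma pow_le_factorial_mul_exp {x l : ℝ} (hx : 0 ≤ x) (hl : 0 < l) (m : ℕ) :
    x ^ m ≤ m ! * l⁻¹ ^ m * rexp (l * x) := by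
  have h := Real.pow_div_factorial_le_exp _ (mul_nonneg hl.le hx) m
  rw [div_le_iff₀ (by positivity)] at h
  calc x ^ m = l⁻¹ ^ m * (l * x) ^ m := by
        rw [← mul_pow, ← mul_assoc, inv_mul_cancel₀ hl.ne', one_mul]
    _ ≤ l⁻¹ ^ m * (rexp (l * x) * m !) := by gcongr
    _ = m ! * l⁻¹ ^ m * rexp (l * x) := by ring

lemma sqrt_inv_one_sub_le_exp {u : ℝ} (h₀ : 0 ≤ u) (h₁ : u ≤ 1 / 2) :
    √((1 - u)⁻¹) ≤ rexp u := by
  rw [Real.sqrt_le_left (Real.exp_pos u).le, ← Real.exp_nat_mul, Nat.cast_ofNat]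
  have h : (1 - u)⁻¹ ≤ 1 + 2 * u := by
    rw [inv_le_iff_one_le_mul₀ (by linarith)]
    nlinarith
  linarith [Real.add_one_le_exp (2 * u)]

section CauchySchwarz

variable {α : Type*} [MeasurableSpace α] {μ : Measure α}

lemma sq_integral_mul_le_of_nonneg {f g : α → ℝ} (hf₀ : 0 ≤ᵐ[μ] f) (hg₀ : 0 ≤ᵐ[μ] g)
    (hf : MemLp f 2 μ) (hg : MemLp g 2 μ) :
    (∫ a, f a * g a ∂μ) ^ 2 ≤ (∫ a, f a ^ 2 ∂μ) * ∫ a, g a ^ 2 ∂μ := by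
  have h := integral_mul_le_Lp_mul_Lq_of_nonneg Real.HolderConjugate.two_two hf₀ hg₀
    (by simpa using hf) (by simpa using hg)
  simp only [Real.rpow_two, ← Real.sqrt_eq_rpow] at h
  calc (∫ a, f a * g a ∂μ) ^ 2 ≤ (√(∫ a, f a ^ 2 ∂μ) * √(∫ a, g a ^ 2 ∂μ)) ^ 2 :=
        pow_le_pow_left₀ (integral_nonneg_of_ae (hf₀.mp (hg₀.mono fun a hb ha =>
          mul_nonneg ha hb))) h 2
    _ = (∫ a, f a ^ 2 ∂μ) * ∫ a, g a ^ 2 ∂μ := by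
        rw [mul_pow, Real.sq_sqrt (integral_nonneg fun a => sq_nonneg _),
          Real.sq_sqrt (integral_nonneg fun a => sq_nonneg _)]

end CauchySchwarz

section StdGaussian

variable {d : ℕ}

instance isProbabilityMeasure_stdGaussian (d : ℕ) :
    IsProbabilityMeasure (stdGaussian d) := by
  unfold stdGaussian
  infer_instance

lemma integral_comp_perm_stdGaussian (σ : Equiv.Perm (Fin d)) (F : (Fin d → ℝ) → ℝ) :
    ∫ y, F (y ∘ σ) ∂stdGaussian d = ∫ y, F y ∂stdGaussian d :=
  (measurePreserving_arrowCongr' (fun _ => gaussianReal 0 1) (fun _ => gaussianReal 0 1) σ.symm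
    (MeasurableEquiv.refl ℝ) fun _ => MeasurePreserving.id _).integral_comp' F

lemma integrable_exp_mul_sum_sq_stdGaussian {l : ℝ} (hl : l < 1 / 2) :
    Integrable (fun y : Fin d → ℝ => rexp (l * ∑ i, y i ^ 2)) (stdGaussian d) := by
  simp_rw [Finset.mul_sum, Real.exp_sum]
  exact Integrable.fintype_prod fun _ => integrable_exp_mul_sq_gaussianReal hl

lemma integral_exp_mul_sum_sq_stdGaussian {l : ℝ} (hl : l < 1 / 2) :
    ∫ y, rexp (l * ∑ i, y i ^ 2) ∂stdGaussian d = √((1 - 2 * l)⁻¹) ^ d := by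
  simp_rw [Finset.mul_sum, Real.exp_sum]
  rw [stdGaussian, integral_fintype_prod_eq_pow (fun t => rexp (l * t ^ 2)),
    integral_exp_mul_sq_gaussianReal hl, Fintype.card_fin]

lemma ae_ne_zero_stdGaussian (hd : 0 < d) : ∀ᵐ y ∂stdGaussian d, y ≠ 0 := by
  have := nullSingletonClass_gaussianReal (μ := 0) one_ne_zero
  have : NullSingletonClass (stdGaussian d) :=
    Measure.pi_nullSingletonClass (μ := fun _ => gaussianReal 0 1) ⟨0, hd⟩
  exact compl_mem_ae_iff.2 (measure_singleton 0)

lemma integrable_sum_sq_pow_stdGaussian (m : ℕ) :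
    Integrable (fun y : Fin d → ℝ => (∑ i, y i ^ 2) ^ m) (stdGaussian d) :=
  ((integrable_exp_mul_sum_sq_stdGaussian (l := 1 / 4) (by norm_num)).const_mul
    (m ! * (1 / 4 : ℝ)⁻¹ ^ m)).mono' (by fun_prop : Measurable _).aestronglyMeasurable
    (ae_of_all _ fun y => by
      rw [Real.norm_of_nonneg (by positivity)]
      exact pow_le_factorial_mul_exp (by positivity) (by norm_num) m)

/-- Chernoff's method with `l = m / (2d)`. -/
lemma integral_sum_sq_pow_stdGaussian_le {m : ℕ} (hm : 0 < m) (hmd : 2 * m ≤ d) :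
    ∫ y, (∑ i, y i ^ 2) ^ m ∂stdGaussian d ≤ (2 * rexp 1 * d) ^ m := by
  have hd : (0 : ℝ) < d := by exact_mod_cast (by omega : 0 < d)
  have hmd' : 2 * (m : ℝ) ≤ d := by exact_mod_cast hmd
  set l : ℝ := m / (2 * d) with hl
  have hl₀ : 0 < l := by positivity
  have hl₁ : 2 * l ≤ 1 / 2 := by
    rw [hl, mul_div_assoc', div_le_iff₀ (by positivity)]
    linarith
  have hmgf : √((1 - 2 * l)⁻¹) ^ d ≤ rexp m := by
    calc √((1 - 2 * l)⁻¹) ^ d ≤ rexp (2 * l) ^ d := by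
          gcongr
          exact sqrt_inv_one_sub_le_exp (by positivity) hl₁
      _ = rexp m := by
          rw [← Real.exp_nat_mul, hl]
          field_simp
  have hfac : (m ! : ℝ) * l⁻¹ ^ m ≤ (2 * d) ^ m := by
    calc (m ! : ℝ) * l⁻¹ ^ m ≤ m ^ m * l⁻¹ ^ m := by
          gcongr
          exact_mod_cast Nat.factorial_le_pow m
      _ = (2 * d) ^ m := by
          rw [← mul_pow, hl]
          field_simp
  calc ∫ y, (∑ i, y i ^ 2) ^ m ∂stdGaussian d
      ≤ ∫ y, m ! * l⁻¹ ^ m * rexp (l * ∑ i, y i ^ 2) ∂stdGaussian d :=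
        integral_mono (integrable_sum_sq_pow_stdGaussian m)
          ((integrable_exp_mul_sum_sq_stdGaussian (by linarith)).const_mul _)
          fun y => pow_le_factorial_mul_exp (by positivity) hl₀ m
    _ = m ! * l⁻¹ ^ m * √((1 - 2 * l)⁻¹) ^ d := by
        rw [integral_const_mul, integral_exp_mul_sum_sq_stdGaussian (by linarith)]
    _ ≤ (2 * d) ^ m * rexp m := by gcongr
    _ = (2 * rexp 1 * d) ^ m := by
        rw [← Real.exp_one_pow]
        ring

end StdGaussian

-- junk value: `unitDir 0 = 0`
def unitDir {d : ℕ} (y : Fin d → ℝ) : Fin d → ℝ := fun j => y j / √(∑ k, y k ^ 2)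

section UnitDir

variable {d : ℕ}

lemma sum_sq_pos_of_ne_zero {y : Fin d → ℝ} (hy : y ≠ 0) : 0 < ∑ k, y k ^ 2 := by
  obtain ⟨k, hk⟩ := Function.ne_iff.1 hy
  exact (even_two.pow_pos hk).trans_le (single_le_sum (fun k _ => sq_nonneg (y k)) (mem_univ k))

@[fun_prop]
lemma measurable_unitDir : Measurable (unitDir (d := d)) := by
  unfold unitDir
  fun_prop

lemma unitDir_comp_perm (y : Fin d → ℝ) (σ : Equiv.Perm (Fin d)) :
    unitDir (y ∘ σ) = unitDir y ∘ σ := by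
  ext j
  simp only [unitDir, Function.comp_apply, Equiv.sum_comp σ (fun k => y k ^ 2)]

lemma sum_unitDir_sq_of_ne_zero {y : Fin d → ℝ} (hy : y ≠ 0) : ∑ j, unitDir y j ^ 2 = 1 := by
  have hpos := sum_sq_pos_of_ne_zero hy
  simp_rw [unitDir, div_pow, Real.sq_sqrt hpos.le, ← Finset.sum_div, div_self hpos.ne']

lemma sum_unitDir_sq_le_one (y : Fin d → ℝ) : ∑ j, unitDir y j ^ 2 ≤ 1 := by
  rcases eq_or_ne y 0 with rfl | hy
  · simp [unitDir]
  · exact (sum_unitDir_sq_of_ne_zero hy).le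

lemma sq_unitDir_le_one (y : Fin d → ℝ) (i : Fin d) : unitDir y i ^ 2 ≤ 1 :=
  (single_le_sum (fun j _ => sq_nonneg (unitDir y j)) (mem_univ i)).trans
    (sum_unitDir_sq_le_one y)

lemma abs_unitDir_mul_sqrt (y : Fin d → ℝ) (i : Fin d) :
    |unitDir y i| * √(∑ k, y k ^ 2) = |y i| := by
  rcases eq_or_ne y 0 with rfl | hy
  · simp [unitDir]
  have hpos : 0 < √(∑ k, y k ^ 2) := Real.sqrt_pos.2 (sum_sq_pos_of_ne_zero hy)
  rw [unitDir, abs_div, abs_of_pos hpos, div_mul_cancel₀ _ hpos.ne']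

lemma integral_unitDir_sq_stdGaussian_le (i : Fin d) :
    ∫ y, unitDir y i ^ 2 ∂stdGaussian d ≤ (d : ℝ)⁻¹ := by
  have hint : ∀ j, Integrable (fun y => unitDir y j ^ 2) (stdGaussian d) := fun j =>
    (integrable_const 1).mono' (by fun_prop) (ae_of_all _ fun y => by
      rw [Real.norm_of_nonneg (sq_nonneg _)]
      exact sq_unitDir_le_one y j)
  have hsymm : ∀ j, ∫ y, unitDir y j ^ 2 ∂stdGaussian d = ∫ y, unitDir y i ^ 2 ∂stdGaussian d := by
    intro j
    rw [← integral_comp_perm_stdGaussian (Equiv.swap i j)]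
    simp [unitDir_comp_perm]
  have hsum : (d : ℝ) * ∫ y, unitDir y i ^ 2 ∂stdGaussian d ≤ 1 :=
    calc (d : ℝ) * ∫ y, unitDir y i ^ 2 ∂stdGaussian d
        = ∑ j, ∫ y, unitDir y j ^ 2 ∂stdGaussian d := by simp [hsymm]
      _ = ∫ y, ∑ j, unitDir y j ^ 2 ∂stdGaussian d :=
          (integral_finsetSum _ fun j _ => hint j).symm
      _ ≤ ∫ _, 1 ∂stdGaussian d :=
          integral_mono (integrable_finsetSum _ fun j _ => hint j) (integrable_const 1)
            sum_unitDir_sq_le_one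
      _ = 1 := by simp
  rw [inv_eq_one_div, le_div_iff₀' (Nat.cast_pos.2 i.pos)]
  exact hsum

end UnitDir

/-- Cauchy–Schwarz on `|y i| ^ m = |unitDir y i| ^ m * ‖y‖ ^ m`, against the Gaussian moment
bounds for `|y i| ^ m` from below and `‖y‖ ^ (2 m)` from above. -/
lemma pow_le_integral_unitDir_pow_stdGaussian {d m : ℕ} (i : Fin d) (hm : 0 < m)
    (hmd : 2 * m ≤ d) :
    (m / (4 * π * rexp 5 * d)) ^ m ≤ ∫ y, unitDir y i ^ (2 * m) ∂stdGaussian d := by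
  set B := ∫ y, unitDir y i ^ (2 * m) ∂stdGaussian d
  have hd : (0 : ℝ) < d := by exact_mod_cast (by omega : 0 < d)
  have hf : MemLp (fun y => |unitDir y i| ^ m) 2 (stdGaussian d) :=
    MemLp.of_bound (by fun_prop) 1 (ae_of_all _ fun y => by
      rw [Real.norm_of_nonneg (by positivity)]
      exact pow_le_one₀ (abs_nonneg _) (abs_le_one_iff_mul_self_le_one.2 (by
        simpa [sq] using sq_unitDir_le_one y i)))
  have hsqrt : ∀ y : Fin d → ℝ, (√(∑ k, y k ^ 2) ^ m) ^ 2 = (∑ k, y k ^ 2) ^ m := fun y => by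
    rw [← pow_mul, mul_comm, pow_mul, Real.sq_sqrt (by positivity)]
  have hg : MemLp (fun y : Fin d → ℝ => √(∑ k, y k ^ 2) ^ m) 2 (stdGaussian d) := by
    rw [memLp_two_iff_integrable_sq (Measurable.aestronglyMeasurable (by fun_prop))]
    simp_rw [hsqrt]
    exact integrable_sum_sq_pow_stdGaussian m
  have habs : ∀ y, (|unitDir y i| ^ m) ^ 2 = unitDir y i ^ (2 * m) := fun y => by
    rw [← pow_mul, mul_comm, (even_two_mul m).pow_abs]
  have hCS : (∫ t, |t| ^ m ∂gaussianReal 0 1) ^ 2 ≤ B * (2 * rexp 1 * d) ^ m :=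
    calc (∫ t, |t| ^ m ∂gaussianReal 0 1) ^ 2
        = (∫ y, |unitDir y i| ^ m * √(∑ k, y k ^ 2) ^ m ∂stdGaussian d) ^ 2 := by
          simp_rw [← mul_pow, abs_unitDir_mul_sqrt]
          rw [stdGaussian, integral_comp_eval (f := fun t => |t| ^ m) (by fun_prop)]
      _ ≤ (∫ y, (|unitDir y i| ^ m) ^ 2 ∂stdGaussian d) *
            ∫ y, (√(∑ k, y k ^ 2) ^ m) ^ 2 ∂stdGaussian d :=
          sq_integral_mul_le_of_nonneg (ae_of_all _ fun y => by positivity)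
            (ae_of_all _ fun y => by positivity) hf hg
      _ ≤ B * (2 * rexp 1 * d) ^ m := by
          simp_rw [hsqrt, habs]
          exact mul_le_mul_of_nonneg_left (integral_sum_sq_pow_stdGaussian_le hm hmd)
            (integral_nonneg fun y => (even_two_mul m).pow_nonneg _)
  have hc : (rexp (-2) / √(2 * π) * √m) ^ 2 = m / (2 * π * rexp 4) := by
    rw [mul_pow, div_pow, Real.sq_sqrt (by positivity), Real.sq_sqrt (by positivity),
      ← Real.exp_nat_mul, show ((2 : ℕ) : ℝ) * -2 = -4 by norm_num, Real.exp_neg]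
    field_simp
  have key : (m / (2 * π * rexp 4)) ^ m ≤ B * (2 * rexp 1 * d) ^ m :=
    calc (m / (2 * π * rexp 4)) ^ m = ((rexp (-2) / √(2 * π) * √m) ^ m) ^ 2 := by
          rw [← pow_mul, mul_comm m 2, pow_mul, hc]
      _ ≤ (∫ t, |t| ^ m ∂gaussianReal 0 1) ^ 2 := by
          gcongr
          exact pow_le_integral_abs_pow_gaussianReal hm
      _ ≤ B * (2 * rexp 1 * d) ^ m := hCS
  rw [show (m : ℝ) / (4 * π * rexp 5 * d) = m / (2 * π * rexp 4) / (2 * rexp 1 * d) by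
    rw [show (5 : ℝ) = 4 + 1 by norm_num, Real.exp_add]
    field_simp
    ring, div_pow, div_le_iff₀ (by positivity)]
  exact key

section MatSqrt

variable {d : ℕ} {A : Matrix (Fin d) (Fin d) ℝ}

lemma dotProduct_self_eq_sum_sq (v : Fin d → ℝ) : v ⬝ᵥ v = ∑ i, v i ^ 2 := by
  simp only [dotProduct, sq]

lemma matSqrt_of_posSemidef (hA : A.PosSemidef) :
    matSqrt A = (hA.1.eigenvectorUnitary : Matrix (Fin d) (Fin d) ℝ) *
      diagonal ((↑) ∘ (Real.sqrt ·) ∘ hA.1.eigenvalues) *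
      (star hA.1.eigenvectorUnitary : Matrix (Fin d) (Fin d) ℝ) := by
  rw [matSqrt, dif_pos hA]

lemma matSqrt_transpose (hA : A.PosSemidef) : (matSqrt A)ᵀ = matSqrt A := by
  rw [matSqrt_of_posSemidef hA, transpose_mul, transpose_mul, diagonal_transpose,
    star_eq_conjTranspose, conjTranspose_eq_transpose_of_trivial, transpose_transpose,
    Matrix.mul_assoc]

lemma matSqrt_mul_self (hA : A.PosSemidef) : matSqrt A * matSqrt A = A := by
  have hU : (star hA.1.eigenvectorUnitary : Matrix (Fin d) (Fin d) ℝ) *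
      (hA.1.eigenvectorUnitary : Matrix (Fin d) (Fin d) ℝ) = 1 := Unitary.coe_star_mul_self _
  have hD : (diagonal ((↑) ∘ (Real.sqrt ·) ∘ hA.1.eigenvalues) : Matrix (Fin d) (Fin d) ℝ) *
      diagonal ((↑) ∘ (Real.sqrt ·) ∘ hA.1.eigenvalues) =
        diagonal (RCLike.ofReal ∘ hA.1.eigenvalues) := by
    rw [diagonal_mul_diagonal]
    congr 1
    funext i
    simp [Real.mul_self_sqrt (hA.eigenvalues_nonneg i)]
  conv_rhs => rw [hA.1.spectral_theorem, Unitary.conjStarAlgAut_apply]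
  rw [matSqrt_of_posSemidef hA, ← hD]
  simp only [Matrix.mul_assoc]
  rw [← Matrix.mul_assoc _ _ (diagonal _ * _), hU, Matrix.one_mul]

lemma dotProduct_matSqrt_mulVec_self (hA : A.PosSemidef) (v : Fin d → ℝ) :
    (matSqrt A *ᵥ v) ⬝ᵥ (matSqrt A *ᵥ v) = v ⬝ᵥ (A *ᵥ v) := by
  rw [dotProduct_mulVec, ← matSqrt_transpose hA, vecMul_transpose, matSqrt_transpose hA,
    mulVec_mulVec, matSqrt_mul_self hA, dotProduct_comm]

lemma exists_dotProduct_matSqrt_mulVec_eq (hA : A.PosDef) (i : Fin d) :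
    ∃ u : Fin d → ℝ, ∀ v, u ⬝ᵥ (matSqrt A *ᵥ v) = v i := by
  have hdet : IsUnit (matSqrt A).det := by
    rw [isUnit_iff_ne_zero]
    intro h
    have := hA.det_pos
    rw [← matSqrt_mul_self hA.posSemidef, det_mul, h, mul_zero] at this
    exact lt_irrefl _ this
  refine ⟨(matSqrt A)⁻¹ *ᵥ Pi.single i 1, fun v => ?_⟩
  rw [dotProduct_mulVec, ← matSqrt_transpose hA.posSemidef, vecMul_transpose,
    matSqrt_transpose hA.posSemidef, mulVec_mulVec, mul_nonsing_inv _ hdet, one_mulVec,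
    single_dotProduct, one_mul]

lemma mul_dotProduct_le_dotProduct_mulVec {c : ℝ} (h : (A - c • 1).PosSemidef)
    (v : Fin d → ℝ) : c * (v ⬝ᵥ v) ≤ v ⬝ᵥ (A *ᵥ v) := by
  have := h.dotProduct_mulVec_nonneg v
  rw [star_trivial, sub_mulVec, dotProduct_sub, smul_mulVec, one_mulVec, dotProduct_smul,
    smul_eq_mul] at this
  linarith

lemma dotProduct_mulVec_le_mul_dotProduct {C : ℝ} (h : (C • 1 - A).PosSemidef)
    (v : Fin d → ℝ) : v ⬝ᵥ (A *ᵥ v) ≤ C * (v ⬝ᵥ v) := by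
  have := h.dotProduct_mulVec_nonneg v
  rw [star_trivial, sub_mulVec, dotProduct_sub, smul_mulVec, one_mulVec, dotProduct_smul,
    smul_eq_mul] at this
  linarith

lemma sum_sq_matSqrt_mulVec_unitDir_le (hA : A.PosSemidef) {C : ℝ} (hC₀ : 0 ≤ C)
    (hC : (C • 1 - A).PosSemidef) (y : Fin d → ℝ) :
    ∑ i, (matSqrt A *ᵥ unitDir y) i ^ 2 ≤ C :=
  calc ∑ i, (matSqrt A *ᵥ unitDir y) i ^ 2 = unitDir y ⬝ᵥ (A *ᵥ unitDir y) := by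
        rw [← dotProduct_self_eq_sum_sq, dotProduct_matSqrt_mulVec_self hA]
    _ ≤ C * (unitDir y ⬝ᵥ unitDir y) := dotProduct_mulVec_le_mul_dotProduct hC _
    _ ≤ C := by
        rw [dotProduct_self_eq_sum_sq]
        exact mul_le_of_le_one_right hC₀ (sum_unitDir_sq_le_one y)

lemma le_sum_sq_matSqrt_mulVec_unitDir (hA : A.PosSemidef) {c : ℝ}
    (hc : (A - c • 1).PosSemidef) {y : Fin d → ℝ} (hy : y ≠ 0) :
    c ≤ ∑ i, (matSqrt A *ᵥ unitDir y) i ^ 2 :=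
  calc c = c * (unitDir y ⬝ᵥ unitDir y) := by
        rw [dotProduct_self_eq_sum_sq, sum_unitDir_sq_of_ne_zero hy, mul_one]
    _ ≤ unitDir y ⬝ᵥ (A *ᵥ unitDir y) := mul_dotProduct_le_dotProduct_mulVec hc _
    _ = ∑ i, (matSqrt A *ᵥ unitDir y) i ^ 2 := by
        rw [← dotProduct_self_eq_sum_sq, dotProduct_matSqrt_mulVec_self hA]

end MatSqrt

lemma integral_prod_mul_pow {β : Type*} [MeasurableSpace β] {ν : Measure ℝ} {ρ : Measure β}
    [SFinite ν] [SFinite ρ] (h : β → ℝ) (k : ℕ) :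
    ∫ ω, (ω.1 * h ω.2) ^ k ∂ν.prod ρ = (∫ t, t ^ k ∂ν) * ∫ y, h y ^ k ∂ρ := by
  simp_rw [mul_pow]
  exact integral_prod_mul (fun t => t ^ k) (fun y => h y ^ k)

lemma radial_moment_le {ν : Measure ℝ} [SFinite ν] {d p : ℕ} (i : Fin d) {K : ℝ} (hK : 0 ≤ K)
    (hp : Even p) (hp₀ : 0 < p) (hpd : p ≤ d)
    (h : (∫ ω, (ω.1 * unitDir ω.2 i) ^ p ∂ν.prod (stdGaussian d)) ^ (p : ℝ)⁻¹ ≤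
      K * p * √(∫ ω, (ω.1 * unitDir ω.2 i) ^ 2 ∂ν.prod (stdGaussian d))) :
    (∫ t, t ^ p ∂ν) ^ (p : ℝ)⁻¹ ≤ √(8 * π * rexp 5) * K * √p * √(∫ t, t ^ 2 ∂ν) := by
  rw [integral_prod_mul_pow (fun y => unitDir y i),
    integral_prod_mul_pow (fun y => unitDir y i)] at h
  set A := ∫ t, t ^ p ∂ν
  set T := ∫ t, t ^ 2 ∂ν
  set B := ∫ y, unitDir y i ^ p ∂stdGaussian d
  obtain ⟨m, rfl⟩ := hp.two_dvd
  have hm : 0 < m := by omega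
  have hd : (0 : ℝ) < d := by exact_mod_cast (by omega : 0 < d)
  set κ := √(8 * π * rexp 5)
  set s := √((2 * m : ℕ) : ℝ)
  set r := √((d : ℝ)⁻¹)
  have hB : s * r / κ ≤ B ^ ((2 * m : ℕ) : ℝ)⁻¹ := by
    rw [← Real.pow_rpow_inv_natCast (by positivity : 0 ≤ s * r / κ) hp₀.ne']
    gcongr
    calc (s * r / κ) ^ (2 * m) = (m / (4 * π * rexp 5 * d)) ^ m := by
          rw [pow_mul, div_pow, mul_pow, Real.sq_sqrt (by positivity), Real.sq_sqrt (by positivity),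
            Real.sq_sqrt (by positivity)]
          congr 1
          push_cast
          field_simp
          ring
      _ ≤ B := pow_le_integral_unitDir_pow_stdGaussian i hm hpd
  have hw : √(T * ∫ y, unitDir y i ^ 2 ∂stdGaussian d) ≤ √T * r := by
    rw [← Real.sqrt_mul (integral_nonneg fun t => sq_nonneg t)]
    gcongr
    exact integral_unitDir_sq_stdGaussian_le i
  have hA : 0 ≤ A := integral_nonneg fun t => (even_two_mul m).pow_nonneg t
  have hB₀ : 0 ≤ B := integral_nonneg fun y => (even_two_mul m).pow_nonneg _
  have key : A ^ ((2 * m : ℕ) : ℝ)⁻¹ * (s * r / κ) ≤ κ * K * s * √T * (s * r / κ) :=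
    calc A ^ ((2 * m : ℕ) : ℝ)⁻¹ * (s * r / κ)
        ≤ A ^ ((2 * m : ℕ) : ℝ)⁻¹ * B ^ ((2 * m : ℕ) : ℝ)⁻¹ := by gcongr
      _ = (A * B) ^ ((2 * m : ℕ) : ℝ)⁻¹ := (Real.mul_rpow hA hB₀).symm
      _ ≤ K * ((2 * m : ℕ) : ℝ) * (√T * r) := h.trans (by gcongr)
      _ = κ * K * s * √T * (s * r / κ) := by
          have hs : s * s = ((2 * m : ℕ) : ℝ) := Real.mul_self_sqrt (Nat.cast_nonneg _)
          have hκ : 0 < κ := by positivity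
          rw [← hs]
          field_simp
  exact le_of_mul_le_mul_right key (by positivity)

lemma norm_moment_le {β : Type*} [MeasurableSpace β] {ν : Measure ℝ} [SFinite ν]
    {ρ : Measure β} [IsProbabilityMeasure ρ] {d p : ℕ} {F : β → Fin d → ℝ} (hF : Measurable F)
    {c C K : ℝ} (hc : 0 < c) (hK : 0 ≤ K) (hp : Even p) (hp₀ : 0 < p)
    (hFC : ∀ y, ∑ i, F y i ^ 2 ≤ C) (hFc : ∀ᵐ y ∂ρ, c ≤ ∑ i, F y i ^ 2)
    (hν : (∫ t, t ^ p ∂ν) ^ (p : ℝ)⁻¹ ≤ K * √p * √(∫ t, t ^ 2 ∂ν)) :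
    (∫ ω, √(∑ i, (ω.1 * F ω.2 i) ^ 2) ^ p ∂ν.prod ρ) ^ (p : ℝ)⁻¹ ≤
      √(C / c) * K * √p * √(∫ ω, ∑ i, (ω.1 * F ω.2 i) ^ 2 ∂ν.prod ρ) := by
  set N : β → ℝ := fun y => √(∑ i, F y i ^ 2)
  have hN : ∀ y, N y ^ 2 = ∑ i, F y i ^ 2 := fun y => Real.sq_sqrt (by positivity)
  have hsum : ∀ ω : ℝ × β, ∑ i, (ω.1 * F ω.2 i) ^ 2 = (ω.1 * N ω.2) ^ 2 := fun ω => by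
    simp_rw [mul_pow, ← Finset.mul_sum, hN]
  have hnorm : ∀ ω : ℝ × β, √(∑ i, (ω.1 * F ω.2 i) ^ 2) ^ p = (ω.1 * N ω.2) ^ p := fun ω => by
    rw [hsum, Real.sqrt_sq_eq_abs, hp.pow_abs]
  simp_rw [hnorm, hsum, integral_prod_mul_pow N]
  set A := ∫ t, t ^ p ∂ν
  set T := ∫ t, t ^ 2 ∂ν
  have hNp : ∫ y, N y ^ p ∂ρ ≤ √C ^ p := by
    calc ∫ y, N y ^ p ∂ρ ≤ ∫ _, √C ^ p ∂ρ :=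
          integral_mono_of_nonneg (ae_of_all _ fun y => by positivity) (integrable_const _)
            (ae_of_all _ fun y =>
              pow_le_pow_left₀ (Real.sqrt_nonneg _) (Real.sqrt_le_sqrt (hFC y)) p)
      _ = √C ^ p := by simp
  have hN2 : c ≤ ∫ y, N y ^ 2 ∂ρ := by
    have hint : Integrable (fun y => N y ^ 2) ρ :=
      (integrable_const C).mono' (by fun_prop) (ae_of_all _ fun y => by
        rw [Real.norm_of_nonneg (sq_nonneg _), hN]
        exact hFC y)
    calc c = ∫ _, c ∂ρ := by simp
      _ ≤ ∫ y, N y ^ 2 ∂ρ := integral_mono_ae (integrable_const c) hint (by simpa only [hN])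
  have hA : 0 ≤ A := integral_nonneg fun t => hp.pow_nonneg t
  calc (A * ∫ y, N y ^ p ∂ρ) ^ (p : ℝ)⁻¹
      ≤ (A * √C ^ p) ^ (p : ℝ)⁻¹ :=
        Real.rpow_le_rpow (mul_nonneg hA (integral_nonneg fun y => by positivity))
          (mul_le_mul_of_nonneg_left hNp hA) (by positivity)
    _ = A ^ (p : ℝ)⁻¹ * √C := by
        rw [Real.mul_rpow hA (by positivity), Real.pow_rpow_inv_natCast (by positivity) hp₀.ne']
    _ ≤ K * √p * √T * (√(C / c) * √c) := by
        rw [← Real.sqrt_mul' _ hc.le, div_mul_cancel₀ _ hc.ne']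
        gcongr
    _ = √(C / c) * K * √p * (√T * √c) := by ring
    _ ≤ √(C / c) * K * √p * √(T * ∫ y, N y ^ 2 ∂ρ) := by
        rw [← Real.sqrt_mul' _ hc.le]
        gcongr

/-- sub-Gaussian moments of the radial part and of the norm
of a sub-exponential elliptical distribution. -/
theorem subexponential_elliptical_moments :
    ∀ c C CSE : ℝ, 0 < c → 0 < C → 0 < CSE →
      ∃ C' : ℝ, 0 < C' ∧
        ∀ (d : ℕ) (St : Matrix (Fin d) (Fin d) ℝ) (ν : Measure ℝ),
          IsProbabilityMeasure ν → ν {t : ℝ | t ≤ 0} = 0 →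
          St.PosDef → (St - c • 1).PosSemidef → (C • 1 - St).PosSemidef →
          (let x : ℝ × (Fin d → ℝ) → Fin d → ℝ := fun ω => fun i =>
             ω.1 * ((matSqrt St).mulVec
               (fun j => ω.2 j / Real.sqrt (∑ k, (ω.2 k) ^ 2))) i
           let μ := ν.prod (stdGaussian d)
           (∀ (u : Fin d → ℝ) (p : ℕ), Even p → 0 < p →
              (∫ ω, (∑ i, u i * x ω i) ^ p ∂μ) ^ ((p : ℝ)⁻¹)
                ≤ CSE * (p : ℝ) *
                  Real.sqrt (∫ ω, (∑ i, u i * x ω i) ^ 2 ∂μ)) →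
           ∀ p : ℕ, Even p → 0 < p → p ≤ d →
             ((∫ t, t ^ p ∂ν) ^ ((p : ℝ)⁻¹)
                ≤ C' * Real.sqrt p * Real.sqrt (∫ t, t ^ 2 ∂ν)) ∧
             ((∫ ω, (Real.sqrt (∑ i, (x ω i) ^ 2)) ^ p ∂μ) ^ ((p : ℝ)⁻¹)
                ≤ C' * Real.sqrt p *
                  Real.sqrt (∫ ω, (∑ i, (x ω i) ^ 2) ∂μ))) := by
  intro c C CSE hc hC hCSE
  set κ := √(8 * π * rexp 5)
  refine ⟨κ * CSE * max 1 √(C / c), by positivity, ?_⟩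
  intro d St ν hν _ hSt hSt_c hSt_C x μ hsub p hp hp₀ hpd
  have i : Fin d := ⟨0, by omega⟩
  obtain ⟨u, hu⟩ := exists_dotProduct_matSqrt_mulVec_eq hSt i
  have hux : ∀ ω, ∑ j, u j * x ω j = ω.1 * unitDir ω.2 i := fun ω => by
    show ∑ j, u j * (ω.1 * (matSqrt St *ᵥ unitDir ω.2) j) = _
    rw [← hu (unitDir ω.2), dotProduct, Finset.mul_sum]
    exact Finset.sum_congr rfl fun j _ => by ring
  have hradial : (∫ t, t ^ p ∂ν) ^ (p : ℝ)⁻¹ ≤ κ * CSE * √p * √(∫ t, t ^ 2 ∂ν) :=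
    radial_moment_le i hCSE.le hp hp₀ hpd (by simpa only [hux] using hsub u p hp hp₀)
  have hnorm := norm_moment_le (ρ := stdGaussian d) (F := fun y => matSqrt St *ᵥ unitDir y)
    (by fun_prop) hc (by positivity) hp hp₀
    (sum_sq_matSqrt_mulVec_unitDir_le hSt.posSemidef hC.le hSt_C)
    ((ae_ne_zero_stdGaussian (by omega)).mono fun y hy =>
      le_sum_sq_matSqrt_mulVec_unitDir hSt.posSemidef hSt_c hy) hradial
  have h₁ : κ * CSE ≤ κ * CSE * max 1 √(C / c) :=
    le_mul_of_one_le_right (by positivity) (le_max_left _ _)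
  have h₂ : √(C / c) * (κ * CSE) ≤ κ * CSE * max 1 √(C / c) := by
    rw [mul_comm]
    exact mul_le_mul_of_nonneg_left (le_max_right _ _) (by positivity)
  exact ⟨hradial.trans (by gcongr), hnorm.trans (by gcongr ?_ * _ * _)⟩

end Paper
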